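/- Let G be a maximal 3-γc-vertex critical graph with δ(G) ≥ 4 and α(G) = δ(G) + 1. Then no vertex of degree δ(G) belongs to any maximum independent set of G. -/

import Mathlib

open Finset

variable {V : Type*}

/-- `D` is a connected dominating set of `G`: every vertex is in `D` or adjacent to a
vertex of `D`, and the subgraph induced by `D` is connected. -/
def IsConnDomSet (G : SimpleGraph V) (D : Set V) : Prop :=
  (∀ v : V, v ∈ D ∨ ∃ u ∈ D, G.Adj u v) ∧ (G.induce D).Connected

/-- The connected domination number `γc(G)`. -/
noncomputable def gammaC (G : SimpleGraph V) [Fintype V] : ℕ :=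
  sInf {k | ∃ D : Finset V, D.card = k ∧ IsConnDomSet G ↑D}

/-- The independence number `α(G)`. -/
noncomputable def alpha (G : SimpleGraph V) [Fintype V] : ℕ :=
  sSup {k | ∃ I : Finset V, I.card = k ∧ (↑I : Set V).Pairwise fun u v => ¬ G.Adj u v}

/-- The clique number `ω(G)`. -/
noncomputable def omegaNum (G : SimpleGraph V) [Fintype V] : ℕ :=
  sSup {k | ∃ W : Finset V, W.card = k ∧ (↑W : Set V).Pairwise G.Adj}

/-- The minimum degree `δ(G)`. -/
noncomputable def minDeg (G : SimpleGraph V) [Fintype V] : ℕ :=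
  sInf {k | ∃ v : V, (G.neighborSet v).ncard = k}

/-- The vertex connectivity `κ(G)`: the minimum size of a set of vertices whose
deletion leaves a graph that is disconnected or has at most one vertex
(so `κ = n - 1` for the complete graph on `n` vertices). -/
noncomputable def kappa (G : SimpleGraph V) [Fintype V] : ℕ :=
  sInf {k | ∃ S : Finset V, S.card = k ∧
    (¬ (G.induce (↑S : Set V)ᶜ).Connected ∨ ((↑S : Set V)ᶜ).Subsingleton)}

/-- `G` is `3`-`γc`-edge critical: `γc(G) = 3` and adding any missing edge decreases `γc`. -/
def EdgeCritical3 (G : SimpleGraph V) [Fintype V] : Prop :=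
  gammaC G = 3 ∧ ∀ u v : V, u ≠ v → ¬ G.Adj u v →
    gammaC (G ⊔ SimpleGraph.fromEdgeSet {s(u, v)}) < 3

/-- `G` is `3`-`γc`-vertex critical: `G` is `2`-connected, `γc(G) = 3` and deleting any
vertex decreases `γc`. -/
def VertexCritical3 (G : SimpleGraph V) [Fintype V] [DecidableEq V] : Prop :=
  2 ≤ kappa G ∧ gammaC G = 3 ∧ ∀ v : V, gammaC (G.induce {w | w ≠ v}) < 3

/-- `G` is maximal `3`-`γc`-vertex critical. -/
def MaximalVertexCritical3 (G : SimpleGraph V) [Fintype V] [DecidableEq V] : Prop :=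
  EdgeCritical3 G ∧ VertexCritical3 G

/-!
Put `J = I \ {x}`: it is independent, no vertex of `J` is adjacent to `x`, and
`|J| = α - 1 = δ = |N(x)|`.

By vertex criticality, `G - y` has a dominating edge, and this edge misses `N[y]`; so every
vertex other than `y` has a neighbour outside `N[y]`, and no neighbourhood is a clique.

By edge criticality, for distinct `y, y' ∈ J` the graph `G + yy'` has a dominating edge; since
`x` sees neither `y` nor `y'`, it has the form `{y, w}` (up to swapping `y` and `y'`) with `w`
a neighbour of `x` adjacent to every vertex of `J` except `y'`, and `{y, w}` dominates `G - y'`.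

Choose for each `y ∈ J` a neighbour `f y` of `x` not adjacent to `y` (vertex criticality),
taking such a `w` whenever `y` plays the role of `y'`. Then `f` is injective, hence by counting a
bijection `J → N(x)`; so `w = f y'` above, and as `f y ≁ y`, domination of `f y` by `{y, f y'}`
gives `f y ~ f y'`. Hence `N(x)` is a clique, a contradiction.
-/

open SimpleGraph

section DominatingEdges

variable {G : SimpleGraph V}

lemma adj_of_connected_induce_pair {a b : V} (hab : a ≠ b) (h : (G.induce {a, b}).Connected) :
    G.Adj a b := by
  obtain ⟨⟨c, hc⟩, hac⟩ := (h.preconnected ⟨a, by simp⟩ ⟨b, by simp⟩).nonempty_neighborSet_left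
    (by simpa using hab)
  rcases hc with rfl | rfl
  · exact absurd hac (G.induce _).irrefl
  · exact hac

lemma isConnDomSet_pair [DecidableEq V] {a b : V} (hab : G.Adj a b)
    (hdom : ∀ t, t ≠ a → t ≠ b → G.Adj a t ∨ G.Adj b t) :
    IsConnDomSet G ↑({a, b} : Finset V) := by
  refine ⟨fun t => ?_, by rw [coe_pair]; exact induce_pair_connected_of_adj hab⟩
  by_cases ha : t = a
  · simp [ha]
  by_cases hb : t = b
  · simp [hb]
  rcases hdom t ha hb with h | h
  · exact Or.inr ⟨a, by simp, h⟩
  · exact Or.inr ⟨b, by simp, h⟩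

lemma isConnDomSet_univ [Fintype V] (hG : G.Connected) : IsConnDomSet G ↑(univ : Finset V) :=
  ⟨fun v => Or.inl (mem_univ v), by rw [coe_univ]; exact G.induceUnivIso.connected_iff.mpr hG⟩

lemma gammaC_le_card [Fintype V] {D : Finset V} (hD : IsConnDomSet G ↑D) : gammaC G ≤ D.card :=
  Nat.sInf_le ⟨D, rfl, hD⟩

lemma exists_isConnDomSet_card_eq_gammaC [Fintype V] (hG : G.Connected) :
    ∃ D : Finset V, D.card = gammaC G ∧ IsConnDomSet G ↑D :=
  Nat.sInf_mem (s := {k | ∃ D : Finset V, D.card = k ∧ IsConnDomSet G ↑D})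
    ⟨_, univ, rfl, isConnDomSet_univ hG⟩

lemma not_dominating_edge_of_gammaC_eq_three [Fintype V] (h3 : gammaC G = 3) {a b : V}
    (hab : G.Adj a b) : ¬ ∀ t, t ≠ a → t ≠ b → G.Adj a t ∨ G.Adj b t := fun hdom => by
  classical
  have := (gammaC_le_card (isConnDomSet_pair hab hdom)).trans card_le_two
  omega

lemma exists_dominating_edge_of_gammaC_lt_three [Fintype V] [Nontrivial V] (hG : G.Connected)
    (h : gammaC G < 3) : ∃ a b, G.Adj a b ∧ ∀ t, t ≠ a → t ≠ b → G.Adj a t ∨ G.Adj b t := by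
  classical
  obtain ⟨D, hD, hdom, hconn⟩ := exists_isConnDomSet_card_eq_gammaC hG
  obtain ⟨⟨a, ha⟩⟩ := hconn.nonempty
  have hD : D.card = 1 ∨ D.card = 2 := by
    have := card_pos.mpr ⟨a, ha⟩
    omega
  rcases hD with hD | hD
  · obtain ⟨a, rfl⟩ := card_eq_one.mp hD
    have hdom' : ∀ t, t ≠ a → G.Adj a t := fun t ht => by simpa [ht] using hdom t
    obtain ⟨b, hba⟩ := exists_ne a
    exact ⟨a, b, hdom' b hba, fun t ht _ => Or.inl (hdom' t ht)⟩
  · obtain ⟨a, b, hab, rfl⟩ := card_eq_two.mp hD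
    rw [coe_pair] at hconn
    refine ⟨a, b, adj_of_connected_induce_pair hab hconn, fun t hta htb => ?_⟩
    simpa [hta, htb] using hdom t

end DominatingEdges

def DominatesExcept (G : SimpleGraph V) (a b v : V) : Prop :=
  ∀ t, t ≠ a → t ≠ b → t ≠ v → G.Adj a t ∨ G.Adj b t

section Criticality

variable {G : SimpleGraph V}

lemma connected_induce_compl_of_card_lt_kappa [Fintype V] {S : Finset V} (hS : S.card < kappa G) :
    (G.induce (↑S : Set V)ᶜ).Connected ∧ ((↑S : Set V)ᶜ).Nontrivial := by
  by_contra h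
  rw [not_and_or, Set.not_nontrivial_iff] at h
  exact hS.not_ge (Nat.sInf_le ⟨S, rfl, h⟩)

lemma connected_of_two_le_kappa [Fintype V] (h : 2 ≤ kappa G) : G.Connected ∧ Nontrivial V := by
  have := connected_induce_compl_of_card_lt_kappa (S := ∅) (G := G) (by simp; omega)
  rw [coe_empty, Set.compl_empty] at this
  exact ⟨G.induceUnivIso.connected_iff.mp this.1, Set.nontrivial_univ_iff.mp this.2⟩

lemma connected_induce_ne_of_two_le_kappa [Fintype V] [DecidableEq V] (h : 2 ≤ kappa G) (v : V) :
    (G.induce {w | w ≠ v}).Connected ∧ Nontrivial {w | w ≠ v} := by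
  have := connected_induce_compl_of_card_lt_kappa (S := {v}) (G := G) (by simp; omega)
  rw [coe_singleton] at this
  exact ⟨this.1, this.2.coe_sort⟩

lemma not_adj_of_dominatesExcept [Fintype V] (h3 : gammaC G = 3) {a b v : V} (hab : G.Adj a b)
    (hd : DominatesExcept G a b v) : ¬ G.Adj a v ∧ ¬ G.Adj b v := by
  refine ⟨fun hav => ?_, fun hbv => ?_⟩ <;>
  refine not_dominating_edge_of_gammaC_eq_three h3 hab fun t hta htb => ?_ <;>
  obtain rfl | htv := eq_or_ne t v
  · exact Or.inl hav
  · exact hd t hta htb htv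
  · exact Or.inr hbv
  · exact hd t hta htb htv

lemma VertexCritical3.exists_adj_not_adj [Fintype V] [DecidableEq V] (h : VertexCritical3 G)
    {x y : V} (hxy : x ≠ y) : ∃ c, G.Adj x c ∧ c ≠ y ∧ ¬ G.Adj c y := by
  obtain ⟨hκ, h3, hdel⟩ := h
  obtain ⟨hconn, _⟩ := connected_induce_ne_of_two_le_kappa hκ y
  obtain ⟨⟨c, hcy⟩, ⟨d, hdy⟩, hcd, hdom⟩ := exists_dominating_edge_of_gammaC_lt_three hconn (hdel y)
  have hd : DominatesExcept G c d y := fun t htc htd hty =>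
    hdom ⟨t, hty⟩ (fun h => htc (congrArg Subtype.val h)) (fun h => htd (congrArg Subtype.val h))
  obtain ⟨hcy', hdy'⟩ := not_adj_of_dominatesExcept h3 hcd hd
  obtain rfl | hxc := eq_or_ne x c
  · exact ⟨d, hcd, hdy, hdy'⟩
  obtain rfl | hxd := eq_or_ne x d
  · exact ⟨c, hcd.symm, hcy, hcy'⟩
  rcases hd x hxc hxd hxy with h | h
  · exact ⟨c, h.symm, hcy, hcy'⟩
  · exact ⟨d, h.symm, hdy, hdy'⟩

lemma VertexCritical3.not_isClique_neighborSet [Fintype V] [DecidableEq V] (h : VertexCritical3 G)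
    (x : V) : ¬ G.IsClique (G.neighborSet x) := by
  intro hcl
  have := (connected_of_two_le_kappa h.1).2
  obtain ⟨y, hyx⟩ := exists_ne x
  obtain ⟨c, hxc, -, -⟩ := h.exists_adj_not_adj hyx.symm
  obtain ⟨d, hxd, hdc, hdc'⟩ := h.exists_adj_not_adj (G.ne_of_adj hxc)
  exact hdc' (hcl hxd hxc hdc)

lemma sup_edge_adj_iff_of_left_ne {u v p t : V} (hpu : p ≠ u) (hpv : p ≠ v) :
    (G ⊔ edge u v).Adj p t ↔ G.Adj p t := by
  simp [edge_adj, hpu, hpv]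

lemma sup_edge_adj_iff_of_right_ne {u v p t : V} (htu : t ≠ u) (htv : t ≠ v) :
    (G ⊔ edge u v).Adj p t ↔ G.Adj p t := by
  simp [edge_adj, htu, htv]

lemma adj_and_dominatesExcept_of_sup_edge {u v x b : V} (hxu : x ≠ u) (hxv : x ≠ v)
    (hux : ¬ G.Adj u x) (hvx : ¬ G.Adj v x) (hub : (G ⊔ edge u v).Adj u b)
    (hdom : ∀ t, t ≠ u → t ≠ b → (G ⊔ edge u v).Adj u t ∨ (G ⊔ edge u v).Adj b t) :
    G.Adj u b ∧ DominatesExcept G u b v := by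
  have hbv : b ≠ v := by
    rintro rfl
    rcases hdom x hxu hxv with h | h <;> rw [sup_edge_adj_iff_of_right_ne hxu hxv] at h
    exacts [hux h, hvx h]
  refine ⟨(sup_edge_adj_iff_of_right_ne hub.ne.symm hbv).mp hub, fun t htu htb htv => ?_⟩
  simpa only [sup_edge_adj_iff_of_right_ne htu htv] using hdom t htu htb

lemma EdgeCritical3.exists_dominatesExcept [Fintype V] (h : EdgeCritical3 G) (hG : G.Connected)
    {u v x : V} (huv : u ≠ v) (hnadj : ¬ G.Adj u v) (hxu : x ≠ u) (hxv : x ≠ v)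
    (hux : ¬ G.Adj u x) (hvx : ¬ G.Adj v x) :
    ∃ w, G.Adj u w ∧ ¬ G.Adj w v ∧ DominatesExcept G u w v ∨
      G.Adj v w ∧ ¬ G.Adj w u ∧ DominatesExcept G v w u := by
  have : Nontrivial V := nontrivial_of_ne u v huv
  obtain ⟨a, b, hab, hdom⟩ : ∃ a b, (G ⊔ edge u v).Adj a b ∧
      ∀ t, t ≠ a → t ≠ b → (G ⊔ edge u v).Adj a t ∨ (G ⊔ edge u v).Adj b t :=
    exists_dominating_edge_of_gammaC_lt_three (hG.mono le_sup_left) (h.2 u v huv hnadj)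
  wlog ha : a = u ∨ a = v generalizing a b
  · refine this b a hab.symm (fun t htb hta => (hdom t hta htb).symm) ?_
    by_contra hb
    push Not at ha hb
    refine not_dominating_edge_of_gammaC_eq_three h.1
      ((sup_edge_adj_iff_of_left_ne ha.1 ha.2).mp hab) fun t hta htb => ?_
    simpa only [sup_edge_adj_iff_of_left_ne ha.1 ha.2, sup_edge_adj_iff_of_left_ne hb.1 hb.2]
      using hdom t hta htb
  wlog hau : a = u generalizing u v
  · rw [edge_comm] at hab hdom
    obtain ⟨w, hw⟩ := this huv.symm (fun h => hnadj h.symm) hxv hxu hvx hux hab hdom ha.symm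
      (ha.resolve_left hau)
    exact ⟨w, hw.symm⟩
  subst hau
  obtain ⟨hab, hd⟩ := adj_and_dominatesExcept_of_sup_edge hxu hxv hux hvx hab hdom
  exact ⟨b, Or.inl ⟨hab, (not_adj_of_dominatesExcept h.1 hab hd).2, hd⟩⟩

end Criticality

def MissesOnly (G : SimpleGraph V) (J : Finset V) (w b : V) : Prop :=
  ¬ G.Adj w b ∧ ∀ z ∈ J, z ≠ b → G.Adj w z

section Neighbourhood

variable {G : SimpleGraph V} {x : V} {J : Finset V}

lemma ne_of_adj_of_forall_not_adj (hJx : ∀ y ∈ J, ¬ G.Adj x y) {c y : V} (hxc : G.Adj x c)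
    (hy : y ∈ J) : c ≠ y := by
  rintro rfl
  exact hJx c hy hxc

lemma adj_and_missesOnly (hJ : (J : Set V).Pairwise fun a b => ¬ G.Adj a b) (hxJ : x ∉ J)
    (hJx : ∀ y ∈ J, ¬ G.Adj x y) {a b w : V} (ha : a ∈ J) (hb : b ∈ J) (haw : G.Adj a w)
    (hwb : ¬ G.Adj w b) (hd : DominatesExcept G a w b) : G.Adj x w ∧ MissesOnly G J w b := by
  have hxw : G.Adj x w := by
    have hwx : w ≠ x := by
      rintro rfl
      exact hJx a ha haw.symm
    exact ((hd x (ne_of_mem_of_not_mem ha hxJ).symm hwx.symm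
      (ne_of_mem_of_not_mem hb hxJ).symm).resolve_left fun h => hJx a ha h.symm).symm
  refine ⟨hxw, hwb, fun z hz hzb => ?_⟩
  obtain rfl | hza := eq_or_ne z a
  · exact haw.symm
  refine ((hd z hza ?_ hzb).resolve_left fun h => hJ ha hz hza.symm h)
  exact (ne_of_adj_of_forall_not_adj hJx hxw hz).symm

lemma exists_adj_missesOnly [Fintype V] (hE : EdgeCritical3 G) (hG : G.Connected)
    (hJ : (J : Set V).Pairwise fun a b => ¬ G.Adj a b) (hxJ : x ∉ J)
    (hJx : ∀ y ∈ J, ¬ G.Adj x y) {y y' : V} (hy : y ∈ J) (hy' : y' ∈ J) (hne : y ≠ y') :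
    ∃ w, G.Adj x w ∧ (MissesOnly G J w y' ∧ DominatesExcept G y w y' ∨
      MissesOnly G J w y ∧ DominatesExcept G y' w y) := by
  obtain ⟨w, ⟨hyw, hwy', hd⟩ | ⟨hy'w, hwy, hd⟩⟩ := hE.exists_dominatesExcept hG hne (hJ hy hy' hne)
    (ne_of_mem_of_not_mem hy hxJ).symm (ne_of_mem_of_not_mem hy' hxJ).symm
    (fun h => hJx y hy h.symm) (fun h => hJx y' hy' h.symm)
  · obtain ⟨hxw, hmo⟩ := adj_and_missesOnly hJ hxJ hJx hy hy' hyw hwy' hd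
    exact ⟨w, hxw, Or.inl ⟨hmo, hd⟩⟩
  · obtain ⟨hxw, hmo⟩ := adj_and_missesOnly hJ hxJ hJx hy' hy hy'w hwy hd
    exact ⟨w, hxw, Or.inr ⟨hmo, hd⟩⟩

lemma exists_bijOn_neighborSet_not_adj [Fintype V] [DecidableEq V] (hE : EdgeCritical3 G)
    (hV : VertexCritical3 G) (hJ : (J : Set V).Pairwise fun a b => ¬ G.Adj a b) (hxJ : x ∉ J)
    (hJx : ∀ y ∈ J, ¬ G.Adj x y) (hcard : (G.neighborSet x).ncard ≤ J.card) :
    ∃ f : V → V, Set.BijOn f J (G.neighborSet x) ∧ ∀ y ∈ J, ¬ G.Adj (f y) y := by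
  have hG := (connected_of_two_le_kappa hV.1).1
  have hf : ∀ y ∈ J, ∃ c, G.Adj x c ∧ ¬ G.Adj c y ∧
      ((∃ w, G.Adj x w ∧ MissesOnly G J w y) → MissesOnly G J c y) := by
    intro y hy
    by_cases hw : ∃ w, G.Adj x w ∧ MissesOnly G J w y
    · obtain ⟨w, hxw, hmo⟩ := hw
      exact ⟨w, hxw, hmo.1, fun _ => hmo⟩
    · obtain ⟨c, hxc, -, hcy⟩ := hV.exists_adj_not_adj (ne_of_mem_of_not_mem hy hxJ).symm
      exact ⟨c, hxc, hcy, fun h => absurd h hw⟩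
  choose! f hfx hfy hfmo using hf
  have hinj : Set.InjOn f J := by
    intro y hy y' hy' heq
    by_contra hne
    obtain ⟨w, hxw, ⟨hmo, -⟩ | ⟨hmo, -⟩⟩ := exists_adj_missesOnly hE hG hJ hxJ hJx hy hy' hne
    · exact hfy y hy (heq ▸ (hfmo y' hy' ⟨w, hxw, hmo⟩).2 y hy hne)
    · exact hfy y' hy' (heq ▸ (hfmo y hy ⟨w, hxw, hmo⟩).2 y' hy' (Ne.symm hne))
  have hmaps : Set.MapsTo f J (G.neighborSet x) := hfx
  have himage : f '' J = G.neighborSet x :=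
    Set.eq_of_subset_of_ncard_le hmaps.image_subset
      (by rwa [hinj.ncard_image, Set.ncard_coe_finset]) (Set.toFinite _)
  exact ⟨f, ⟨hmaps, hinj, himage.symm.subset⟩, hfy⟩

lemma isClique_neighborSet_of_bijOn [Fintype V] (hE : EdgeCritical3 G) (hG : G.Connected)
    (hJ : (J : Set V).Pairwise fun a b => ¬ G.Adj a b) (hxJ : x ∉ J)
    (hJx : ∀ y ∈ J, ¬ G.Adj x y) {f : V → V} (hf : Set.BijOn f J (G.neighborSet x))
    (hfy : ∀ y ∈ J, ¬ G.Adj (f y) y) : G.IsClique (G.neighborSet x) := by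
  have hwit : ∀ w b, b ∈ J → G.Adj x w → MissesOnly G J w b → w = f b := by
    intro w b hb hxw hmo
    obtain ⟨c, hc, rfl⟩ := hf.surjOn hxw
    by_contra hne
    exact hfy c hc (hmo.2 c hc fun h => hne (congrArg f h))
  have hadj : ∀ a b, a ∈ J → b ∈ J → a ≠ b → ∀ w, G.Adj x w → MissesOnly G J w b →
      DominatesExcept G a w b → G.Adj (f a) (f b) := by
    intro a b ha hb hab w hxw hmo hd
    obtain rfl := hwit w b hb hxw hmo
    have hxfa : G.Adj x (f a) := hf.mapsTo ha
    exact ((hd (f a) (ne_of_adj_of_forall_not_adj hJx hxfa ha) (fun h => hab (hf.injOn ha hb h))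
      (ne_of_adj_of_forall_not_adj hJx hxfa hb)).resolve_left fun h => hfy a ha h.symm).symm
  intro u hu u' hu' hne
  obtain ⟨y, hy, rfl⟩ := hf.surjOn hu
  obtain ⟨y', hy', rfl⟩ := hf.surjOn hu'
  have hyy' : y ≠ y' := by
    rintro rfl
    exact hne rfl
  obtain ⟨w, hxw, ⟨hmo, hd⟩ | ⟨hmo, hd⟩⟩ := exists_adj_missesOnly hE hG hJ hxJ hJx hy hy' hyy'
  · exact hadj y y' hy hy' hyy' w hxw hmo hd
  · exact (hadj y' y hy' hy hyy'.symm w hxw hmo hd).symm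

end Neighbourhood

theorem stmt_2_general (G : SimpleGraph V) [Fintype V] [DecidableEq V]
    (h : MaximalVertexCritical3 G)
    (hα : alpha G = minDeg G + 1)
    (x : V) (hx : (G.neighborSet x).ncard = minDeg G)
    (I : Finset V) (hIind : (↑I : Set V).Pairwise fun u v => ¬ G.Adj u v)
    (hIcard : I.card = alpha G) :
    x ∉ I := by
  intro hxI
  obtain ⟨hE, hV⟩ := h
  have hJ : ((I.erase x : Finset V) : Set V).Pairwise fun u v => ¬ G.Adj u v :=
    hIind.mono (coe_subset.mpr (erase_subset x I))
  have hJx : ∀ y ∈ I.erase x, ¬ G.Adj x y := fun y hy =>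
    hIind hxI (mem_of_mem_erase hy) (ne_of_mem_erase hy).symm
  have hcard : (G.neighborSet x).ncard ≤ (I.erase x).card := by
    rw [card_erase_of_mem hxI]
    omega
  obtain ⟨f, hf, hfy⟩ :=
    exists_bijOn_neighborSet_not_adj hE hV hJ (notMem_erase x I) hJx hcard
  exact hV.not_isClique_neighborSet x <| isClique_neighborSet_of_bijOn hE
    (connected_of_two_le_kappa hV.1).1 hJ (notMem_erase x I) hJx hf hfy

/-- in a maximal `3`-`γc`-vertex critical graph with `δ ≥ 4` and
`α = δ + 1`, no vertex of degree `δ` belongs to any maximum independent set. -/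
theorem stmt_2 (G : SimpleGraph V) [Fintype V] [DecidableEq V]
    (h : MaximalVertexCritical3 G)
    (hδ : 4 ≤ minDeg G) (hα : alpha G = minDeg G + 1)
    (x : V) (hx : (G.neighborSet x).ncard = minDeg G)
    (I : Finset V) (hIind : (↑I : Set V).Pairwise fun u v => ¬ G.Adj u v)
    (hIcard : I.card = alpha G) :
    x ∉ I :=
  stmt_2_general G h hα x hx I hIind hIcard
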